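/- For every natural number s, for complex parameters with α ∉ {1, 2, …, s} (and δ not a nonpositive integer) and x, y in the interior of the domain of absolute convergence, the s-th partial derivative of H1 with respect to y satisfies ∂^s/∂y^s H1(α,β,γ;δ;x,y) = [(−1)^s (β)_s (γ)_s / (1−α)_s] · H1(α−s, β+s, γ+s; δ; x, y). -/

import Mathlib

noncomputable section

/-- Pochhammer symbol `(μ)_j` for an integer index `j`: for `j = k ≥ 0` it is
`μ(μ+1)⋯(μ+k-1)`, and for `j = -k < 0` it is `(-1)^k / ((1-μ)_k)`. -/
def poch (μ : ℂ) (j : ℤ) : ℂ :=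
  if 0 ≤ j then ∏ i ∈ Finset.range j.toNat, (μ + (i : ℂ))
  else (-1) ^ (-j).toNat / ∏ i ∈ Finset.range (-j).toNat, (1 - μ + (i : ℂ))

/-- General term of the Horn series `H1`. -/
def H1term (α β γ δ x y : ℂ) (p : ℕ × ℕ) : ℂ :=
  poch α ((p.1 : ℤ) - (p.2 : ℤ)) * poch β ((p.1 : ℤ) + (p.2 : ℤ)) * poch γ (p.2 : ℤ) /
    (poch δ (p.1 : ℤ) * (p.1.factorial : ℂ) * (p.2.factorial : ℂ)) * x ^ p.1 * y ^ p.2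

/-- The Horn hypergeometric function `H1`. -/
def H1 (α β γ δ x y : ℂ) : ℂ := ∑' p : ℕ × ℕ, H1term α β γ δ x y p

/-- General term of the Horn series `H2`. -/
def H2term (α β γ δ ε x y : ℂ) (p : ℕ × ℕ) : ℂ :=
  poch α ((p.1 : ℤ) - (p.2 : ℤ)) * poch β (p.1 : ℤ) * poch γ (p.2 : ℤ) * poch δ (p.2 : ℤ) /
    (poch ε (p.1 : ℤ) * (p.1.factorial : ℂ) * (p.2.factorial : ℂ)) * x ^ p.1 * y ^ p.2

/-- The Horn hypergeometric function `H2`. -/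
def H2 (α β γ δ ε x y : ℂ) : ℂ := ∑' p : ℕ × ℕ, H2term α β γ δ ε x y p

/-- General term of the Horn series `H3`. -/
def H3term (α β γ x y : ℂ) (p : ℕ × ℕ) : ℂ :=
  poch α (2 * (p.1 : ℤ) + (p.2 : ℤ)) * poch β (p.2 : ℤ) /
    (poch γ ((p.1 : ℤ) + (p.2 : ℤ)) * (p.1.factorial : ℂ) * (p.2.factorial : ℂ)) *
    x ^ p.1 * y ^ p.2

/-- The Horn hypergeometric function `H3`. -/
def H3 (α β γ x y : ℂ) : ℂ := ∑' p : ℕ × ℕ, H3term α β γ x y p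

/-- General term of the Horn series `H5`. -/
def H5term (α β γ x y : ℂ) (p : ℕ × ℕ) : ℂ :=
  poch α (2 * (p.1 : ℤ) + (p.2 : ℤ)) * poch β ((p.2 : ℤ) - (p.1 : ℤ)) /
    (poch γ (p.2 : ℤ) * (p.1.factorial : ℂ) * (p.2.factorial : ℂ)) * x ^ p.1 * y ^ p.2

/-- The Horn hypergeometric function `H5`. -/
def H5 (α β γ x y : ℂ) : ℂ := ∑' p : ℕ × ℕ, H5term α β γ x y p

/-- General term of the Horn series `H6`. -/
def H6term (α β γ x y : ℂ) (p : ℕ × ℕ) : ℂ :=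
  poch α (2 * (p.1 : ℤ) - (p.2 : ℤ)) * poch β ((p.2 : ℤ) - (p.1 : ℤ)) * poch γ (p.2 : ℤ) /
    ((p.1.factorial : ℂ) * (p.2.factorial : ℂ)) * x ^ p.1 * y ^ p.2

/-- The Horn hypergeometric function `H6`. -/
def H6 (α β γ x y : ℂ) : ℂ := ∑' p : ℕ × ℕ, H6term α β γ x y p

/-- General term of the Horn series `H7`. -/
def H7term (α β γ δ x y : ℂ) (p : ℕ × ℕ) : ℂ :=
  poch α (2 * (p.1 : ℤ) - (p.2 : ℤ)) * poch β (p.2 : ℤ) * poch γ (p.2 : ℤ) /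
    (poch δ (p.1 : ℤ) * (p.1.factorial : ℂ) * (p.2.factorial : ℂ)) * x ^ p.1 * y ^ p.2

/-- The Horn hypergeometric function `H7`. -/
def H7 (α β γ δ x y : ℂ) : ℂ := ∑' p : ℕ × ℕ, H7term α β γ δ x y p

set_option maxHeartbeats 1000000

lemma poch_nat (μ : ℂ) (k : ℕ) : poch μ (k : ℤ) = ∏ i ∈ Finset.range k, (μ + (i : ℂ)) := by
  simp [poch]

lemma poch_neg (μ : ℂ) (k : ℕ) (hk : 0 < k) :
    poch μ (-(k : ℤ)) = (-1) ^ k / ∏ i ∈ Finset.range k, (1 - μ + (i : ℂ)) := by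
  rw [poch, if_neg (by omega)]
  simp

lemma poch_add (μ : ℂ) (a b : ℕ) :
    poch μ ((a : ℤ) + (b : ℤ)) = poch μ (a : ℤ) * poch (μ + (a : ℂ)) (b : ℤ) := by
  have h : ((a : ℤ) + (b : ℤ)) = ((a + b : ℕ) : ℤ) := by push_cast; ring
  rw [h, poch_nat, poch_nat, poch_nat, Finset.prod_range_add]
  congr 1
  refine Finset.prod_congr rfl fun i _ => ?_
  push_cast; ring

lemma reflect_prod (α : ℂ) (s : ℕ) :
    ∏ i ∈ Finset.range s, (α - (s : ℂ) + (i : ℂ)) =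
      (-1) ^ s * ∏ i ∈ Finset.range s, (1 - α + (i : ℂ)) := by
  calc ∏ i ∈ Finset.range s, (α - (s : ℂ) + (i : ℂ))
      = ∏ i ∈ Finset.range s, (-1 : ℂ) * (1 - α + ((s - 1 - i : ℕ) : ℂ)) := by
        refine Finset.prod_congr rfl fun i hi => ?_
        rw [Finset.mem_range] at hi
        rw [Nat.cast_sub (by omega), Nat.cast_sub (by omega)]
        push_cast; ring
    _ = (-1) ^ s * ∏ i ∈ Finset.range s, (1 - α + ((s - 1 - i : ℕ) : ℂ)) := by
        rw [Finset.prod_mul_distrib, Finset.prod_const, Finset.card_range]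
    _ = (-1) ^ s * ∏ i ∈ Finset.range s, (1 - α + (i : ℂ)) := by
        rw [Finset.prod_range_reflect (fun i => 1 - α + (i : ℂ)) s]

lemma poch_shift (α : ℂ) (s : ℕ) (h : (∏ i ∈ Finset.range s, (1 - α + (i : ℂ))) ≠ 0) (j : ℤ) :
    poch α (j - (s : ℤ)) * ∏ i ∈ Finset.range s, (1 - α + (i : ℂ)) =
      (-1) ^ s * poch (α - (s : ℂ)) j := by
  rcases le_or_gt (s : ℤ) j with hj | hj
  · obtain ⟨k, hk⟩ : ∃ k : ℕ, j = (s : ℤ) + (k : ℤ) := ⟨(j - s).toNat, by omega⟩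
    subst hk
    have h1 : ((s : ℤ) + (k : ℤ) - (s : ℤ)) = (k : ℤ) := by ring
    rw [h1, poch_nat, poch_add, poch_nat, poch_nat, reflect_prod]
    have h2 : ∀ i ∈ Finset.range k, α - (s : ℂ) + (s : ℂ) + (i : ℂ) = α + i := by
      intro i _; ring
    rw [Finset.prod_congr rfl h2]
    have hsq : ((-1 : ℂ) ^ s) * ((-1 : ℂ) ^ s) = 1 := by
      rw [← pow_add, show s + s = 2 * s from by ring, pow_mul]
      norm_num
    calc (∏ x ∈ Finset.range k, (α + ↑x)) * ∏ x ∈ Finset.range s, (1 - α + ↑x)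
        = ((-1:ℂ)^s * (-1:ℂ)^s) * ((∏ x ∈ Finset.range k, (α + ↑x)) *
            ∏ x ∈ Finset.range s, (1 - α + ↑x)) := by rw [hsq, one_mul]
      _ = (-1) ^ s * ((-1) ^ s * (∏ x ∈ Finset.range s, (1 - α + ↑x)) *
            ∏ x ∈ Finset.range k, (α + ↑x)) := by ring
  · rcases le_or_gt 0 j with hj0 | hj0
    · obtain ⟨k, hk⟩ : ∃ k : ℕ, j = (k : ℤ) := ⟨j.toNat, by omega⟩
      subst hk
      set d : ℕ := s - k with hd
      have hks : k < s := by exact_mod_cast hj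
      have hsd : s = d + k := by omega
      have h1 : (k : ℤ) - (s : ℤ) = -(d : ℤ) := by omega
      rw [h1, poch_neg α d (by omega)]
      have hsplit : ∏ i ∈ Finset.range s, (1 - α + (i : ℂ)) =
          (∏ i ∈ Finset.range d, (1 - α + (i : ℂ))) *
            ∏ i ∈ Finset.range k, (1 - α + ((d : ℂ) + (i : ℂ))) := by
        rw [hsd, Finset.prod_range_add]
        congr 1
        refine Finset.prod_congr rfl fun i _ => ?_
        push_cast; ring
      have hP : (∏ i ∈ Finset.range d, (1 - α + (i : ℂ))) ≠ 0 := by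
        intro h0
        rw [hsplit, h0, zero_mul] at h
        exact h rfl
      rw [poch_nat]
      have hr : ∏ i ∈ Finset.range k, (α - (s : ℂ) + (i : ℂ)) =
          (-1) ^ k * ∏ i ∈ Finset.range k, (1 - α + ((d : ℂ) + (i : ℂ))) := by
        calc ∏ i ∈ Finset.range k, (α - (s : ℂ) + (i : ℂ))
            = ∏ i ∈ Finset.range k, ((α - (d : ℂ)) - (k : ℂ) + (i : ℂ)) := by
              refine Finset.prod_congr rfl fun i _ => ?_
              have hc : (s : ℂ) = (d : ℂ) + (k : ℂ) := by rw [hsd]; push_cast; ring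
              rw [hc]; ring
          _ = (-1) ^ k * ∏ i ∈ Finset.range k, (1 - (α - (d : ℂ)) + (i : ℂ)) :=
              reflect_prod (α - (d : ℂ)) k
          _ = (-1) ^ k * ∏ i ∈ Finset.range k, (1 - α + ((d : ℂ) + (i : ℂ))) := by
              congr 1
              exact Finset.prod_congr rfl fun i _ => by ring
      rw [hsplit, hr]
      have hsign : ((-1 : ℂ)) ^ s * (-1) ^ k = (-1) ^ d := by
        rw [← pow_add, show s + k = d + 2 * k from by omega, pow_add, pow_mul]
        norm_num
      field_simp
      rw [← hsign]
      ring
    · obtain ⟨k, hk, hkpos⟩ : ∃ k : ℕ, j = -(k : ℤ) ∧ 0 < k := ⟨(-j).toNat, by omega, by omega⟩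
      subst hk
      have h1 : (-(k : ℤ) - (s : ℤ)) = -((k + s : ℕ) : ℤ) := by push_cast; ring
      rw [h1, poch_neg α (k + s) (by omega), poch_neg (α - s) k hkpos]
      have hsplit : ∏ i ∈ Finset.range (k + s), (1 - α + (i : ℂ)) =
          (∏ i ∈ Finset.range s, (1 - α + (i : ℂ))) *
            ∏ i ∈ Finset.range k, (1 - (α - (s : ℂ)) + (i : ℂ)) := by
        rw [add_comm k s, Finset.prod_range_add]
        congr 1
        refine Finset.prod_congr rfl fun i _ => ?_
        push_cast; ring
      have key : ∀ (c P Q : ℂ), P ≠ 0 → c / (P * Q) * P = c / Q := by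
        intro c P Q hP
        rw [div_mul_eq_mul_div, mul_comm c P, mul_div_mul_left _ _ hP]
      rw [hsplit, key _ _ _ h, pow_add]
      ring

lemma fact_ratio (n s : ℕ) :
    (∏ i ∈ Finset.range s, ((n : ℂ) + 1 + i)) * (n.factorial : ℂ) =
      ((n + s).factorial : ℂ) := by
  induction s with
  | zero => simp
  | succ s ih =>
      rw [Finset.prod_range_succ, show n + (s + 1) = (n + s) + 1 from rfl, Nat.factorial_succ]
      push_cast
      linear_combination ((n : ℂ) + 1 + s) * ih

lemma keyId (α β γ δ : ℂ) (s : ℕ)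
    (hα : (∏ i ∈ Finset.range s, (1 - α + (i : ℂ))) ≠ 0)
    (hδ : ∀ k : ℕ, δ ≠ -(k : ℂ)) (m n : ℕ) :
    (∏ i ∈ Finset.range s, ((n : ℂ) + 1 + i)) *
      (poch α ((m : ℤ) - ((n + s : ℕ) : ℤ)) * poch β ((m : ℤ) + ((n + s : ℕ) : ℤ)) *
        poch γ ((n + s : ℕ) : ℤ) /
        (poch δ (m : ℤ) * (m.factorial : ℂ) * ((n + s : ℕ).factorial : ℂ)))
    = ((-1) ^ s * poch β (s : ℤ) * poch γ (s : ℤ) / poch (1 - α) (s : ℤ)) *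
      (poch (α - (s : ℂ)) ((m : ℤ) - (n : ℤ)) * poch (β + (s : ℂ)) ((m : ℤ) + (n : ℤ)) *
        poch (γ + (s : ℂ)) (n : ℤ) /
        (poch δ (m : ℤ) * (m.factorial : ℂ) * (n.factorial : ℂ))) := by
  have hδm : poch δ (m : ℤ) ≠ 0 := by
    rw [poch_nat]
    exact Finset.prod_ne_zero_iff.mpr fun i _ h0 => hδ i (eq_neg_of_add_eq_zero_left h0)
  have hb : poch β ((m : ℤ) + ((n + s : ℕ) : ℤ)) =
      poch β (s : ℤ) * poch (β + (s : ℂ)) ((m : ℤ) + (n : ℤ)) := by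
    have h := poch_add β s (m + n)
    rw [show (m : ℤ) + ((n + s : ℕ) : ℤ) = (s : ℤ) + ((m + n : ℕ) : ℤ) from by push_cast; ring, h,
      show ((m + n : ℕ) : ℤ) = (m : ℤ) + (n : ℤ) from by push_cast; ring]
  have hg : poch γ ((n + s : ℕ) : ℤ) = poch γ (s : ℤ) * poch (γ + (s : ℂ)) (n : ℤ) := by
    have h := poch_add γ s n
    rw [show ((n + s : ℕ) : ℤ) = (s : ℤ) + (n : ℤ) from by push_cast; ring, h]
  have ha : poch α ((m : ℤ) - ((n + s : ℕ) : ℤ)) * ∏ i ∈ Finset.range s, (1 - α + (i : ℂ)) =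
      (-1) ^ s * poch (α - (s : ℂ)) ((m : ℤ) - (n : ℤ)) := by
    have h := poch_shift α s hα ((m : ℤ) - (n : ℤ))
    rw [show (m : ℤ) - ((n + s : ℕ) : ℤ) = ((m : ℤ) - (n : ℤ)) - (s : ℤ) from by push_cast; ring, h]
  have hfac : ((n + s).factorial : ℂ) =
      (∏ i ∈ Finset.range s, ((n : ℂ) + 1 + i)) * (n.factorial : ℂ) := (fact_ratio n s).symm
  have hR : (∏ i ∈ Finset.range s, ((n : ℂ) + 1 + i)) ≠ 0 := by
    refine Finset.prod_ne_zero_iff.mpr fun i _ => ?_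
    rw [show (n : ℂ) + 1 + i = ((n + 1 + i : ℕ) : ℂ) from by push_cast; ring]
    exact Nat.cast_ne_zero.mpr (by omega)
  have hm : (m.factorial : ℂ) ≠ 0 := Nat.cast_ne_zero.mpr m.factorial_ne_zero
  have hn : (n.factorial : ℂ) ≠ 0 := Nat.cast_ne_zero.mpr n.factorial_ne_zero
  rw [hb, hg, hfac, poch_nat (1 - α) s]
  push_cast at ha ⊢
  field_simp
  linear_combination (poch β (s:ℤ) * poch (β + (s:ℂ)) ((m:ℤ) + n) * poch γ (s:ℤ) *
    poch (γ + (s:ℂ)) (n:ℤ)) * ha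

lemma descFactorial_prod (n s : ℕ) :
    (((n + s).descFactorial s : ℕ) : ℝ) = ∏ i ∈ Finset.range s, ((n : ℝ) + 1 + i) := by
  induction s with
  | zero => simp
  | succ s ih =>
      rw [Finset.prod_range_succ, show n + (s + 1) = (n + s) + 1 from rfl,
        Nat.succ_descFactorial_succ]
      push_cast
      push_cast at ih
      linear_combination ((n : ℝ) + s + 1) * ih

lemma summable_ratio_geom (s : ℕ) {q : ℝ} (h0 : 0 ≤ q) (h1 : q < 1) :
    Summable fun n : ℕ => (∏ i ∈ Finset.range s, ((n : ℝ) + 1 + i)) * q ^ n := by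
  have h := summable_descFactorial_mul_geometric_of_norm_lt_one (R := ℝ) s
    (r := q) (by rwa [Real.norm_eq_abs, abs_of_nonneg h0])
  exact h.congr fun n => by rw [descFactorial_prod]

lemma ratio_geom_le (s : ℕ) {q : ℝ} (h0 : 0 ≤ q) (h1 : q < 1) :
    ∃ M : ℝ, 0 ≤ M ∧ ∀ n : ℕ, (∏ i ∈ Finset.range s, ((n : ℝ) + 1 + i)) * q ^ n ≤ M := by
  have hs := summable_ratio_geom s h0 h1
  refine ⟨∑' n : ℕ, (∏ i ∈ Finset.range s, ((n : ℝ) + 1 + i)) * q ^ n,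
    tsum_nonneg fun n => by positivity, fun n => Summable.le_tsum hs n fun b _ => by positivity⟩

lemma norm_ratio (s n : ℕ) :
    ‖∏ i ∈ Finset.range s, ((n : ℂ) + 1 + i)‖ = ∏ i ∈ Finset.range s, ((n : ℝ) + 1 + i) := by
  rw [show (∏ i ∈ Finset.range s, ((n : ℂ) + 1 + i)) =
      (((∏ i ∈ Finset.range s, ((n : ℝ) + 1 + i) : ℝ)) : ℂ) from by push_cast; rfl]
  rw [Complex.norm_real, Real.norm_eq_abs, abs_of_nonneg (by positivity)]

lemma deriv_coeff_summable {c : ℕ → ℂ} {r : ℝ}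
    (h : ∀ ρ : ℝ, 0 ≤ ρ → ρ < r → Summable fun n => ‖c n‖ * ρ ^ n) :
    ∀ ρ : ℝ, 0 ≤ ρ → ρ < r → Summable fun n : ℕ => ‖((n : ℂ) + 1) * c (n + 1)‖ * ρ ^ n := by
  intro ρ hρ0 hρr
  set ρ' := (ρ + r) / 2 with hρ'def
  have hr0 : 0 < r := lt_of_le_of_lt hρ0 hρr
  have hρ'0 : 0 < ρ' := by rw [hρ'def]; positivity
  have hρρ' : ρ < ρ' := by rw [hρ'def]; linarith
  have hρ'r : ρ' < r := by rw [hρ'def]; linarith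
  obtain ⟨M, hM0, hM⟩ := ratio_geom_le 1 (q := ρ / ρ') (by positivity)
    ((div_lt_one hρ'0).mpr hρρ')
  have hM' : ∀ n : ℕ, ((n : ℝ) + 1) * ρ ^ n ≤ M * ρ' ^ n := by
    intro n
    have h1 := hM n
    rw [Finset.prod_range_one] at h1
    norm_num at h1
    have h2 : ((n : ℝ) + 1) * (ρ / ρ') ^ n * ρ' ^ n ≤ M * ρ' ^ n :=
      mul_le_mul_of_nonneg_right h1 (by positivity)
    calc ((n : ℝ) + 1) * ρ ^ n = ((n : ℝ) + 1) * (ρ / ρ') ^ n * ρ' ^ n := by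
          rw [div_pow, mul_assoc, div_mul_cancel₀ _ (by positivity : ρ' ^ n ≠ 0)]
      _ ≤ M * ρ' ^ n := h2
  have hbase : Summable fun n => ‖c (n + 1)‖ * ρ' ^ (n + 1) :=
    (summable_nat_add_iff 1).mpr (h ρ' hρ'0.le hρ'r)
  refine Summable.of_nonneg_of_le (fun n => by positivity)
    (fun n => ?_) ((hbase.mul_left (M / ρ')))
  have hnorm : ‖((n : ℂ) + 1) * c (n + 1)‖ = ((n : ℝ) + 1) * ‖c (n + 1)‖ := by
    rw [norm_mul]
    congr 1
    rw [show ((n : ℂ) + 1) = ((n + 1 : ℕ) : ℂ) from by push_cast; ring,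
      RCLike.norm_natCast]
    push_cast; ring
  rw [hnorm]
  calc ((n : ℝ) + 1) * ‖c (n + 1)‖ * ρ ^ n
      = (((n : ℝ) + 1) * ρ ^ n) * ‖c (n + 1)‖ := by ring
    _ ≤ (M * ρ' ^ n) * ‖c (n + 1)‖ := by
        apply mul_le_mul_of_nonneg_right (hM' n) (norm_nonneg _)
    _ = M / ρ' * (‖c (n + 1)‖ * ρ' ^ (n + 1)) := by
        field_simp
        ring

lemma iteratedDeriv_tsum_pow (r : ℝ) (s : ℕ) :
    ∀ c : ℕ → ℂ, (∀ ρ : ℝ, 0 ≤ ρ → ρ < r → Summable fun n => ‖c n‖ * ρ ^ n) →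
    ∀ y : ℂ, ‖y‖ < r →
    iteratedDeriv s (fun t : ℂ => ∑' n : ℕ, c n * t ^ n) y =
      ∑' n : ℕ, (∏ i ∈ Finset.range s, ((n : ℂ) + 1 + i)) * c (n + s) * y ^ n := by
  induction s with
  | zero => intro c hc y hy; simp
  | succ s ih =>
    intro c hc y hy
    have hr0 : 0 < r := lt_of_le_of_lt (norm_nonneg y) hy
    have hderiv : ∀ z ∈ Metric.ball (0 : ℂ) r,
        HasDerivAt (fun t : ℂ => ∑' n : ℕ, c n * t ^ n)
          (∑' n : ℕ, ((n : ℂ) + 1) * c (n + 1) * z ^ n) z := by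
      intro z hz
      rw [mem_ball_zero_iff] at hz
      set ρ' := (‖z‖ + r) / 2 with hρ'def
      have hρ'0 : 0 < ρ' := by rw [hρ'def]; positivity
      have h1 : ‖z‖ < ρ' := by rw [hρ'def]; linarith
      have h2 : ρ' < r := by rw [hρ'def]; linarith
      set u : ℕ → ℝ := fun n => ‖c n‖ * ((n : ℝ) * ρ' ^ (n - 1)) with hudef
      have hu : Summable u := by
        rw [← summable_nat_add_iff 1]
        have := deriv_coeff_summable hc ρ' hρ'0.le h2
        refine this.congr fun n => ?_
        rw [hudef]
        have hnorm : ‖((n : ℂ) + 1) * c (n + 1)‖ = ((n : ℝ) + 1) * ‖c (n + 1)‖ := by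
          rw [norm_mul]
          congr 1
          rw [show ((n : ℂ) + 1) = ((n + 1 : ℕ) : ℂ) from by push_cast; ring,
            RCLike.norm_natCast]
          push_cast; ring
        simp only [Nat.add_sub_cancel]
        rw [hnorm]
        push_cast
        ring
      have hg' : ∀ (n : ℕ), ∀ t ∈ Metric.ball (0 : ℂ) ρ',
          ‖c n * ((n : ℂ) * t ^ (n - 1))‖ ≤ u n := by
        intro n t ht
        rw [mem_ball_zero_iff] at ht
        rw [norm_mul, norm_mul, norm_pow]
        rw [hudef]
        have hn : ‖(n : ℂ)‖ = (n : ℝ) := by simp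
        rw [hn]
        have h3 : ‖t‖ ^ (n - 1) ≤ ρ' ^ (n - 1) := pow_le_pow_left₀ (norm_nonneg t) ht.le _
        have h4 : (n : ℝ) * ‖t‖ ^ (n - 1) ≤ (n : ℝ) * ρ' ^ (n - 1) :=
          mul_le_mul_of_nonneg_left h3 (Nat.cast_nonneg n)
        exact mul_le_mul_of_nonneg_left h4 (norm_nonneg _)
      have hmem : z ∈ Metric.ball (0 : ℂ) ρ' := mem_ball_zero_iff.mpr h1
      have hg0 : Summable fun n : ℕ => c n * z ^ n := by
        refine Summable.of_norm ((hc ‖z‖ (norm_nonneg z) hz).congr fun n => ?_)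
        rw [norm_mul, norm_pow]
      have hder := hasDerivAt_tsum_of_isPreconnected hu Metric.isOpen_ball
        (convex_ball (0 : ℂ) ρ').isPreconnected
        (fun n t _ => (hasDerivAt_pow n t).const_mul (c n))
        hg' hmem hg0 hmem
      have hsum' : Summable fun n : ℕ => c n * ((n : ℂ) * z ^ (n - 1)) :=
        Summable.of_norm (Summable.of_nonneg_of_le (fun n => norm_nonneg _)
          (fun n => hg' n z hmem) hu)
      have heq : ∑' n : ℕ, c n * ((n : ℂ) * z ^ (n - 1)) =
          ∑' n : ℕ, ((n : ℂ) + 1) * c (n + 1) * z ^ n := by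
        rw [Summable.tsum_eq_zero_add hsum']
        simp only [Nat.cast_zero, zero_mul, mul_zero, zero_add, Nat.add_sub_cancel]
        exact tsum_congr fun n => by push_cast; ring
      exact heq ▸ hder
    rw [iteratedDeriv_succ']
    have hEv : deriv (fun t : ℂ => ∑' n : ℕ, c n * t ^ n) =ᶠ[nhds y]
        fun t : ℂ => ∑' n : ℕ, ((n : ℂ) + 1) * c (n + 1) * t ^ n :=
      Filter.eventuallyEq_of_mem (Metric.isOpen_ball.mem_nhds (mem_ball_zero_iff.mpr hy))
        fun z hz => (hderiv z hz).deriv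
    rw [Filter.EventuallyEq.iteratedDeriv_eq s hEv]
    rw [ih (fun n => ((n : ℂ) + 1) * c (n + 1)) (deriv_coeff_summable hc) y hy]
    refine tsum_congr fun n => ?_
    rw [Finset.prod_range_succ, show n + (s + 1) = (n + s) + 1 from rfl]
    push_cast
    ring

/-- Derivative formula for `H1` in `y` (paper Eq. (3.18)). -/
theorem H1_deriv_y (s : ℕ) (α β γ δ x y : ℂ)
    (hα : ∀ j ∈ Finset.Icc 1 s, α ≠ (j : ℂ))
    (hδ : ∀ n : ℕ, δ ≠ -(n : ℂ))
    (hint : ∃ X Y : ℝ, ‖x‖ < X ∧ ‖y‖ < Y ∧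
      Summable fun p : ℕ × ℕ => ‖H1term α β γ δ (X : ℂ) (Y : ℂ) p‖) :
    iteratedDeriv s (fun t => H1 α β γ δ x t) y =
      (-1) ^ s * poch β (s : ℤ) * poch γ (s : ℤ) / poch (1 - α) (s : ℤ) *
        H1 (α - (s : ℂ)) (β + (s : ℂ)) (γ + (s : ℂ)) δ x y := by
  classical
  obtain ⟨X, Y, hx, hy, hS⟩ := hint
  have hX0 : 0 < X := lt_of_le_of_lt (norm_nonneg x) hx
  have hY0 : 0 < Y := lt_of_le_of_lt (norm_nonneg y) hy
  have hαP : (∏ i ∈ Finset.range s, (1 - α + (i : ℂ))) ≠ 0 := by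
    refine Finset.prod_ne_zero_iff.mpr fun i hi h0 => ?_
    rw [Finset.mem_range] at hi
    have hai : α = ((i + 1 : ℕ) : ℂ) := by push_cast; linear_combination -h0
    exact hα (i + 1) (Finset.mem_Icc.mpr ⟨by omega, by omega⟩) hai
  set C : ℕ × ℕ → ℂ := fun p =>
    poch α ((p.1 : ℤ) - (p.2 : ℤ)) * poch β ((p.1 : ℤ) + (p.2 : ℤ)) * poch γ (p.2 : ℤ) /
      (poch δ (p.1 : ℤ) * (p.1.factorial : ℂ) * (p.2.factorial : ℂ)) with hCdef
  set C' : ℕ × ℕ → ℂ := fun p =>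
    poch (α - (s : ℂ)) ((p.1 : ℤ) - (p.2 : ℤ)) * poch (β + (s : ℂ)) ((p.1 : ℤ) + (p.2 : ℤ)) *
      poch (γ + (s : ℂ)) (p.2 : ℤ) /
      (poch δ (p.1 : ℤ) * (p.1.factorial : ℂ) * (p.2.factorial : ℂ)) with hC'def
  have htermC : ∀ (x' y' : ℂ) (p : ℕ × ℕ),
      H1term α β γ δ x' y' p = C p * x' ^ p.1 * y' ^ p.2 := fun _ _ _ => rfl
  have htermC' : ∀ (x' y' : ℂ) (p : ℕ × ℕ),
      H1term (α - (s : ℂ)) (β + (s : ℂ)) (γ + (s : ℂ)) δ x' y' p =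
        C' p * x' ^ p.1 * y' ^ p.2 := fun _ _ _ => rfl
  have hSn : Summable fun p : ℕ × ℕ => ‖C p‖ * X ^ p.1 * Y ^ p.2 := by
    refine hS.congr fun p => ?_
    rw [htermC, norm_mul, norm_mul, norm_pow, norm_pow, Complex.norm_real X,
      Complex.norm_real Y, Real.norm_eq_abs, Real.norm_eq_abs,
      abs_of_pos hX0, abs_of_pos hY0]
  have hdom : ∀ (x' y' : ℂ), ‖x'‖ ≤ X → ‖y'‖ ≤ Y →
      Summable fun p : ℕ × ℕ => ‖C p * x' ^ p.1 * y' ^ p.2‖ := by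
    intro x' y' hx' hy'
    refine Summable.of_nonneg_of_le (fun p => norm_nonneg _) (fun p => ?_) hSn
    rw [norm_mul, norm_mul, norm_pow, norm_pow]
    gcongr
    all_goals first | exact norm_nonneg _ | exact hx' | exact hy'
  have hsplit : ∀ (D : ℕ × ℕ → ℂ) (t : ℂ),
      Summable (fun p : ℕ × ℕ => ‖D p * x ^ p.1 * t ^ p.2‖) →
      ∑' p : ℕ × ℕ, D p * x ^ p.1 * t ^ p.2 =
        ∑' n : ℕ, (∑' m : ℕ, D (m, n) * x ^ m) * t ^ n := by
    intro D t hsum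
    have hsum' : Summable fun p : ℕ × ℕ => D p * x ^ p.1 * t ^ p.2 := Summable.of_norm hsum
    have hswap : Summable fun q : ℕ × ℕ => D (q.2, q.1) * x ^ q.2 * t ^ q.1 := hsum'.prod_symm
    calc ∑' p : ℕ × ℕ, D p * x ^ p.1 * t ^ p.2
        = ∑' q : ℕ × ℕ, D (q.2, q.1) * x ^ q.2 * t ^ q.1 :=
          ((Equiv.prodComm ℕ ℕ).tsum_eq (fun p : ℕ × ℕ => D p * x ^ p.1 * t ^ p.2)).symm
      _ = ∑' n : ℕ, ∑' m : ℕ, D (m, n) * x ^ m * t ^ n :=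
          Summable.tsum_prod' hswap fun n => hswap.prod_factor n
      _ = ∑' n : ℕ, (∑' m : ℕ, D (m, n) * x ^ m) * t ^ n := by
          exact tsum_congr fun n => by rw [tsum_mul_right]
  set c : ℕ → ℂ := fun n => ∑' m : ℕ, C (m, n) * x ^ m with hcdef
  set c' : ℕ → ℂ := fun n => ∑' m : ℕ, C' (m, n) * x ^ m with hc'def
  have hH1eq : ∀ t ∈ Metric.ball (0 : ℂ) Y, H1 α β γ δ x t = ∑' n : ℕ, c n * t ^ n := by
    intro t ht
    rw [mem_ball_zero_iff] at ht
    have h1 : H1 α β γ δ x t = ∑' p : ℕ × ℕ, C p * x ^ p.1 * t ^ p.2 :=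
      tsum_congr fun p => htermC x t p
    rw [h1, hsplit C t (hdom x t hx.le ht.le)]
  -- swapped norm summability and fibers
  have hSn2 : Summable fun q : ℕ × ℕ => ‖C (q.2, q.1)‖ * X ^ q.2 * Y ^ q.1 := hSn.prod_symm
  have hfiber : ∀ n : ℕ, Summable fun m : ℕ => ‖C (m, n)‖ * X ^ m * Y ^ n :=
    fun n => hSn2.prod_factor n
  have hfib_x : ∀ n : ℕ, Summable fun m : ℕ => ‖C (m, n) * x ^ m‖ := by
    intro n
    refine Summable.of_nonneg_of_le (fun m => norm_nonneg _) (fun m => ?_)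
      ((hfiber n).mul_right ((Y ^ n)⁻¹))
    rw [norm_mul, norm_pow]
    have he : ‖C (m, n)‖ * X ^ m * Y ^ n * (Y ^ n)⁻¹ = ‖C (m, n)‖ * X ^ m := by
      field_simp
    rw [he]
    gcongr
    all_goals first | exact norm_nonneg _ | exact hx.le
  have hCsum : ∀ ρ : ℝ, 0 ≤ ρ → ρ < Y → Summable fun n : ℕ => ‖c n‖ * ρ ^ n := by
    intro ρ hρ0 hρY
    have houter : Summable fun n : ℕ => ∑' m : ℕ, ‖C (m, n)‖ * X ^ m * Y ^ n := by
      have hnn : 0 ≤ fun q : ℕ × ℕ => ‖C (q.2, q.1)‖ * X ^ q.2 * Y ^ q.1 :=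
        fun q => by positivity
      exact ((summable_prod_of_nonneg hnn).mp hSn2).2
    refine Summable.of_nonneg_of_le (fun n => by positivity) (fun n => ?_) houter
    calc ‖c n‖ * ρ ^ n
        ≤ (∑' m : ℕ, ‖C (m, n) * x ^ m‖) * ρ ^ n :=
          mul_le_mul_of_nonneg_right (norm_tsum_le_tsum_norm (hfib_x n)) (by positivity)
      _ = ∑' m : ℕ, ‖C (m, n) * x ^ m‖ * ρ ^ n := tsum_mul_right.symm
      _ ≤ ∑' m : ℕ, ‖C (m, n)‖ * X ^ m * Y ^ n := by
          refine Summable.tsum_le_tsum (fun m => ?_) ((hfib_x n).mul_right _) (hfiber n)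
          rw [norm_mul, norm_pow]
          gcongr
          all_goals first | exact norm_nonneg _ | exact hx.le | exact hρY.le
  have hEv : (fun t => H1 α β γ δ x t) =ᶠ[nhds y] fun t : ℂ => ∑' n : ℕ, c n * t ^ n :=
    Filter.eventuallyEq_of_mem (Metric.isOpen_ball.mem_nhds (mem_ball_zero_iff.mpr hy)) hH1eq
  rw [Filter.EventuallyEq.iteratedDeriv_eq s hEv,
    iteratedDeriv_tsum_pow Y s c hCsum y hy]
  set K : ℂ := (-1) ^ s * poch β (s : ℤ) * poch γ (s : ℤ) / poch (1 - α) (s : ℤ) with hKdef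
  have hkey : ∀ m n : ℕ, (∏ i ∈ Finset.range s, ((n : ℂ) + 1 + i)) * C (m, n + s) =
      K * C' (m, n) := by
    intro m n
    have h := keyId α β γ δ s hαP hδ m n
    rw [hCdef, hC'def, hKdef]
    exact h
  have hterm_eq : ∀ n : ℕ,
      (∏ i ∈ Finset.range s, ((n : ℂ) + 1 + i)) * c (n + s) = K * c' n := by
    intro n
    calc (∏ i ∈ Finset.range s, ((n : ℂ) + 1 + i)) * c (n + s)
        = ∑' m : ℕ, (∏ i ∈ Finset.range s, ((n : ℂ) + 1 + i)) * (C (m, n + s) * x ^ m) :=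
          tsum_mul_left.symm
      _ = ∑' m : ℕ, K * (C' (m, n) * x ^ m) := by
          refine tsum_congr fun m => ?_
          rw [← mul_assoc, hkey m n, mul_assoc]
      _ = K * c' n := tsum_mul_left
  have hsum1 : ∑' n : ℕ, (∏ i ∈ Finset.range s, ((n : ℂ) + 1 + i)) * c (n + s) * y ^ n =
      K * ∑' n : ℕ, c' n * y ^ n := by
    calc ∑' n : ℕ, (∏ i ∈ Finset.range s, ((n : ℂ) + 1 + i)) * c (n + s) * y ^ n
        = ∑' n : ℕ, K * (c' n * y ^ n) := by
          refine tsum_congr fun n => ?_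
          rw [hterm_eq n, mul_assoc]
      _ = K * ∑' n : ℕ, c' n * y ^ n := tsum_mul_left
  rw [hsum1]
  rcases eq_or_ne K 0 with hK0 | hK0
  · rw [hK0, zero_mul, zero_mul]
  · congr 1
    have hsum2 : Summable fun p : ℕ × ℕ => ‖C' p * x ^ p.1 * y ^ p.2‖ := by
      have hC'eq : ∀ p : ℕ × ℕ, C' p =
          K⁻¹ * ((∏ i ∈ Finset.range s, ((p.2 : ℂ) + 1 + i)) * C (p.1, p.2 + s)) := by
        intro p
        rw [hkey p.1 p.2, ← mul_assoc, inv_mul_cancel₀ hK0, one_mul]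
      obtain ⟨M, hM0, hM⟩ := ratio_geom_le s (q := ‖y‖ / Y) (by positivity)
        ((div_lt_one hY0).mpr hy)
      have hshift : Summable fun p : ℕ × ℕ => ‖C (p.1, p.2 + s)‖ * X ^ p.1 * Y ^ (p.2 + s) := by
        have hinj : Function.Injective (fun p : ℕ × ℕ => ((p.1, p.2 + s) : ℕ × ℕ)) := by
          intro a b hab
          have h1 := congrArg Prod.fst hab
          have h2 := congrArg Prod.snd hab
          simp only [] at h1 h2
          exact Prod.ext_iff.mpr ⟨h1, by omega⟩
        exact hSn.comp_injective hinj
      refine Summable.of_nonneg_of_le (fun p => norm_nonneg _) (fun p => ?_)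
        (hshift.mul_left (‖K⁻¹‖ * M * (Y ^ s)⁻¹))
      rw [hC'eq p, norm_mul, norm_mul, norm_mul, norm_mul, norm_pow, norm_pow, norm_ratio]
      have hMy : (∏ i ∈ Finset.range s, ((p.2 : ℝ) + 1 + i)) * ‖y‖ ^ p.2 ≤ M * Y ^ p.2 := by
        have h1 := hM p.2
        have h2 : (∏ i ∈ Finset.range s, ((p.2 : ℝ) + 1 + i)) * (‖y‖ / Y) ^ p.2 * Y ^ p.2 ≤
            M * Y ^ p.2 := mul_le_mul_of_nonneg_right h1 (by positivity)
        calc (∏ i ∈ Finset.range s, ((p.2 : ℝ) + 1 + i)) * ‖y‖ ^ p.2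
            = (∏ i ∈ Finset.range s, ((p.2 : ℝ) + 1 + i)) * (‖y‖ / Y) ^ p.2 * Y ^ p.2 := by
              rw [div_pow, mul_assoc, div_mul_cancel₀ _ (by positivity : Y ^ p.2 ≠ 0)]
          _ ≤ M * Y ^ p.2 := h2
      calc ‖K⁻¹‖ * ((∏ i ∈ Finset.range s, ((p.2 : ℝ) + 1 + i)) * ‖C (p.1, p.2 + s)‖) *
            ‖x‖ ^ p.1 * ‖y‖ ^ p.2
          = ‖K⁻¹‖ * ‖C (p.1, p.2 + s)‖ * ‖x‖ ^ p.1 *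
              ((∏ i ∈ Finset.range s, ((p.2 : ℝ) + 1 + i)) * ‖y‖ ^ p.2) := by ring
        _ ≤ ‖K⁻¹‖ * ‖C (p.1, p.2 + s)‖ * X ^ p.1 * (M * Y ^ p.2) := by
            have hxp : ‖x‖ ^ p.1 ≤ X ^ p.1 := pow_le_pow_left₀ (norm_nonneg x) hx.le _
            have hb1 : ‖K⁻¹‖ * ‖C (p.1, p.2 + s)‖ * ‖x‖ ^ p.1 ≤
                ‖K⁻¹‖ * ‖C (p.1, p.2 + s)‖ * X ^ p.1 :=
              mul_le_mul_of_nonneg_left hxp (by positivity)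
            exact mul_le_mul hb1 hMy (by positivity) (by positivity)
        _ = ‖K⁻¹‖ * M * (Y ^ s)⁻¹ * (‖C (p.1, p.2 + s)‖ * X ^ p.1 * Y ^ (p.2 + s)) := by
            have he1 : ((Y : ℝ) ^ s)⁻¹ * Y ^ s = 1 :=
              inv_mul_cancel₀ (pow_ne_zero s hY0.ne')
            calc ‖K⁻¹‖ * ‖C (p.1, p.2 + s)‖ * X ^ p.1 * (M * Y ^ p.2)
                = (‖K⁻¹‖ * M * (‖C (p.1, p.2 + s)‖ * X ^ p.1 * Y ^ p.2)) * 1 := by ring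
              _ = (‖K⁻¹‖ * M * (‖C (p.1, p.2 + s)‖ * X ^ p.1 * Y ^ p.2)) *
                    ((Y ^ s)⁻¹ * Y ^ s) := by rw [he1]
              _ = ‖K⁻¹‖ * M * (Y ^ s)⁻¹ * (‖C (p.1, p.2 + s)‖ * X ^ p.1 * Y ^ (p.2 + s)) := by
                  rw [pow_add]; ring
    have hH1' : H1 (α - (s : ℂ)) (β + (s : ℂ)) (γ + (s : ℂ)) δ x y =
        ∑' n : ℕ, c' n * y ^ n := by
      have h1 : H1 (α - (s : ℂ)) (β + (s : ℂ)) (γ + (s : ℂ)) δ x y =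
          ∑' p : ℕ × ℕ, C' p * x ^ p.1 * y ^ p.2 := tsum_congr fun p => htermC' x y p
      rw [h1, hsplit C' y hsum2]
    rw [hH1']


end
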